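/- Let K be a kernel on ℝ² and let f : ℝ² → [0,∞] be measurable with ∫_{ℝ²} K(x,x)(1−e^{−f(x)}) dx < ∞. For k ∈ ℕ define f_k(x) = f(x) for x ∈ B(0,k) and f_k(x) = 0 otherwise, and define S(g) = Σ_{n=0}^∞ ((−1)^n/n!) ∫_{(ℝ²)^n} det(K(x_i,x_j))_{1≤i,j≤n} Π_{i=1}^n (1−e^{−g(x_i)}) dx_1⋯dx_n for measurable g with 0 ≤ g ≤ f. Then lim_{k→∞} S(f_k) = S(f); that is, the Fredholm-type series is continuous under truncation of f to large balls. -/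

import Mathlib

/-! Hadamard's inequality `|det (K(xᵢ,xⱼ))| ≤ ∏ K(xᵢ,xᵢ)` shows that, for every measurable
`g ≤ f`, the `n`-th integrand of `S(g)` is dominated by `∏ K(xᵢ,xᵢ)(1 - e^{-f(xᵢ)})`, whose
integral is `M^n` with `M = ∫ K(x,x)(1 - e^{-f(x)}) dx < ∞`. Since `f_k = f` eventually at every
point, dominated convergence applies to each integral, and then (Tannery's theorem) to the
series, whose `n`-th term is bounded by `M^n / n!` uniformly in `k`. -/

open MeasureTheory Measure Metric Filter
open scoped ENNReal NNReal Real Topology BigOperators ComplexOrder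

noncomputable section

abbrev E2 : Type := EuclideanSpace ℝ (Fin 2)

/-- `expNeg a = e^{-a}` for `a ∈ [0,∞]`, with `expNeg ∞ = 0`. -/
def expNeg (a : ℝ≥0∞) : ℝ := if a = ∞ then 0 else Real.exp (-a.toReal)

structure IsKernel (K : E2 → E2 → ℂ) : Prop where
  continuous : Continuous fun p : E2 × E2 => K p.1 p.2
  hermitian : ∀ x y : E2, K y x = starRingEnd ℂ (K x y)
  locSqInt : ∀ s : Set (E2 × E2), IsCompact s →
    IntegrableOn (fun p : E2 × E2 => ‖K p.1 p.2‖ ^ 2) s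
  posSemidef : ∀ (n : ℕ) (x : Fin n → E2),
    (Matrix.of fun i j : Fin n => K (x i) (x j)).PosSemidef

/-- The Fredholm-type series
`S(g) = Σ_{n≥0} ((-1)^n/n!) ∫_{(ℝ²)^n} det(K(x_i,x_j)) ∏ (1-e^{-g(x_i)}) dx`. -/
def fredholmSeries (K : E2 → E2 → ℂ) (g : E2 → ℝ≥0∞) : ℂ :=
  ∑' n : ℕ, ((-1 : ℂ) ^ n / n.factorial) *
    ∫ x : Fin n → E2,
      (Matrix.of fun i j : Fin n => K (x i) (x j)).det *
        ∏ i : Fin n, ((1 - expNeg (g (x i)) : ℝ) : ℂ)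

theorem Real.prod_le_one_of_sum_le_card {ι : Type*} (s : Finset ι) {z : ι → ℝ}
    (hz : ∀ i ∈ s, 0 ≤ z i) (h : ∑ i ∈ s, z i ≤ s.card) : ∏ i ∈ s, z i ≤ 1 := by
  calc ∏ i ∈ s, z i ≤ ∏ i ∈ s, Real.exp (z i - 1) :=
        Finset.prod_le_prod hz fun i _ => by linarith [Real.add_one_le_exp (z i - 1)]
    _ = Real.exp (∑ i ∈ s, z i - s.card) := by
        rw [← Real.exp_sum, Finset.sum_sub_distrib, Finset.sum_const, nsmul_one]
    _ ≤ 1 := Real.exp_le_one_iff.2 (sub_nonpos.2 h)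

namespace Matrix.PosSemidef

variable {𝕜 n : Type*} [RCLike 𝕜] {M : Matrix n n 𝕜}

theorem re_diag_nonneg (hM : M.PosSemidef) (i : n) : 0 ≤ RCLike.re (M i i) :=
  (RCLike.nonneg_iff.1 hM.diag_nonneg).1

variable [Fintype n] [DecidableEq n]

theorem norm_det_le_one_of_re_trace_le_card (hM : M.PosSemidef)
    (h : RCLike.re M.trace ≤ Fintype.card n) : ‖M.det‖ ≤ 1 := by
  have hdet : ‖M.det‖ = ∏ i, hM.1.eigenvalues i := by
    rw [hM.1.det_eq_prod_eigenvalues, ← RCLike.ofReal_prod, RCLike.norm_ofReal,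
      abs_of_nonneg (Finset.prod_nonneg fun i _ => hM.eigenvalues_nonneg i)]
  have htr : RCLike.re M.trace = ∑ i, hM.1.eigenvalues i := by
    rw [hM.1.trace_eq_sum_eigenvalues, ← RCLike.ofReal_sum, RCLike.ofReal_re]
  rw [hdet]
  exact Real.prod_le_one_of_sum_le_card _ (fun i _ => hM.eigenvalues_nonneg i) (htr ▸ h)

/-- Conjugating by `diag ((re Mᵢᵢ + ε)^{-1/2})` gives a positive semidefinite matrix with
diagonal entries at most `1`, whose determinant is at most `1` by AM-GM on its eigenvalues. -/
theorem norm_det_le_prod_add (hM : M.PosSemidef) {ε : ℝ} (hε : 0 < ε) :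
    ‖M.det‖ ≤ ∏ i, (RCLike.re (M i i) + ε) := by
  set d : n → ℝ := fun i => RCLike.re (M i i) + ε
  have hd : ∀ i, 0 < d i := fun i => add_pos_of_nonneg_of_pos (hM.re_diag_nonneg i) hε
  set D : Matrix n n 𝕜 := diagonal fun i => ((Real.sqrt (d i))⁻¹ : ℝ)
  have hDH : Dᴴ = D := by simp [D, diagonal_conjTranspose]
  have hN := hM.mul_mul_conjTranspose_same D
  rw [hDH] at hN
  have hsq : ∀ i, (Real.sqrt (d i))⁻¹ * (Real.sqrt (d i))⁻¹ = (d i)⁻¹ := fun i => by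
    rw [← mul_inv, Real.mul_self_sqrt (hd i).le]
  have hdetN : ‖(D * M * D).det‖ = ‖M.det‖ / ∏ i, d i := by
    rw [det_mul, det_mul, norm_mul, norm_mul, det_diagonal, ← RCLike.ofReal_prod,
      RCLike.norm_ofReal, abs_of_nonneg (by positivity), mul_comm, ← mul_assoc,
      ← Finset.prod_mul_distrib]
    simp only [hsq, Finset.prod_inv_distrib, div_eq_mul_inv, mul_comm]
  have hdiag : ∀ i, RCLike.re ((D * M * D) i i) ≤ 1 := fun i => by
    rw [mul_diagonal, diagonal_mul, mul_comm, ← mul_assoc, ← RCLike.ofReal_mul, hsq,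
      RCLike.re_ofReal_mul, inv_mul_le_one₀ (hd i)]
    exact le_add_of_nonneg_right hε.le
  have htr : RCLike.re (D * M * D).trace ≤ Fintype.card n := by
    rw [trace, _root_.map_sum]
    simpa using Finset.sum_le_sum fun i (_ : i ∈ Finset.univ) => hdiag i
  have := hN.norm_det_le_one_of_re_trace_le_card htr
  rwa [hdetN, div_le_one (Finset.prod_pos fun i _ => hd i)] at this

/-- Hadamard's inequality. -/
theorem norm_det_le_prod_re_diag (hM : M.PosSemidef) : ‖M.det‖ ≤ ∏ i, RCLike.re (M i i) := by
  have hlim : Tendsto (fun ε : ℝ => ∏ i, (RCLike.re (M i i) + ε)) (𝓝[>] 0)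
      (𝓝 (∏ i, RCLike.re (M i i))) := by
    have hcont : Continuous fun ε : ℝ => ∏ i, (RCLike.re (M i i) + ε) := by fun_prop
    simpa using (hcont.tendsto 0).mono_left nhdsWithin_le_nhds
  exact ge_of_tendsto hlim (eventually_nhdsWithin_of_forall fun _ hε => hM.norm_det_le_prod_add hε)

end Matrix.PosSemidef

lemma expNeg_nonneg (a : ℝ≥0∞) : 0 ≤ expNeg a := by
  unfold expNeg
  split_ifs
  exacts [le_rfl, (Real.exp_pos _).le]

lemma expNeg_le_one (a : ℝ≥0∞) : expNeg a ≤ 1 := by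
  unfold expNeg
  split_ifs
  exacts [zero_le_one, Real.exp_le_one_iff.2 (neg_nonpos.2 ENNReal.toReal_nonneg)]

lemma expNeg_antitone : Antitone expNeg := by
  intro a b hab
  by_cases hb : b = ∞
  · simpa [expNeg, hb] using expNeg_nonneg a
  · have ha : a ≠ ∞ := ne_top_of_le_ne_top hb hab
    simp only [expNeg, if_neg ha, if_neg hb, Real.exp_le_exp, neg_le_neg_iff]
    exact ENNReal.toReal_mono hb hab

lemma measurable_expNeg : Measurable expNeg :=
  Measurable.ite (measurableSet_singleton ∞) measurable_const
    (Real.measurable_exp.comp ENNReal.measurable_toReal.neg)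

def fredholmIntegrand (K : E2 → E2 → ℂ) (g : E2 → ℝ≥0∞) (n : ℕ) (x : Fin n → E2) : ℂ :=
  (Matrix.of fun i j : Fin n => K (x i) (x j)).det * ∏ i : Fin n, ((1 - expNeg (g (x i)) : ℝ) : ℂ)

lemma fredholmSeries_eq_tsum (K : E2 → E2 → ℂ) (g : E2 → ℝ≥0∞) :
    fredholmSeries K g =
      ∑' n : ℕ, ((-1 : ℂ) ^ n / n.factorial) * ∫ x, fredholmIntegrand K g n x :=
  rfl

namespace IsKernel

variable {K : E2 → E2 → ℂ}

lemma re_diag_nonneg (hK : IsKernel K) (x : E2) : 0 ≤ (K x x).re := by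
  simpa using (hK.posSemidef 1 fun _ => x).re_diag_nonneg 0

lemma measurable_fredholmIntegrand (hK : IsKernel K) {g : E2 → ℝ≥0∞} (hg : Measurable g)
    (n : ℕ) : Measurable (fredholmIntegrand K g n) := by
  have hmat : Continuous fun x : Fin n → E2 => Matrix.of fun i j : Fin n => K (x i) (x j) :=
    continuous_matrix fun i j =>
      hK.continuous.comp (f := fun x : Fin n → E2 => (x i, x j)) (by fun_prop)
  refine hmat.matrix_det.measurable.mul (Finset.measurable_prod _ fun i _ => ?_)
  exact Complex.measurable_ofReal.comp
    (measurable_const.sub (measurable_expNeg.comp (hg.comp (measurable_pi_apply i))))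

lemma norm_fredholmIntegrand_le (hK : IsKernel K) {g f : E2 → ℝ≥0∞} (hgf : g ≤ f) (n : ℕ)
    (x : Fin n → E2) :
    ‖fredholmIntegrand K g n x‖ ≤ ∏ i, (K (x i) (x i)).re * (1 - expNeg (f (x i))) := by
  have hdet : ‖(Matrix.of fun i j : Fin n => K (x i) (x j)).det‖ ≤ ∏ i, (K (x i) (x i)).re := by
    simpa using (hK.posSemidef n x).norm_det_le_prod_re_diag
  have hprod : ‖∏ i, ((1 - expNeg (g (x i)) : ℝ) : ℂ)‖ ≤ ∏ i, (1 - expNeg (f (x i))) := by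
    rw [norm_prod]
    refine Finset.prod_le_prod (fun i _ => norm_nonneg _) fun i _ => ?_
    rw [Complex.norm_real, Real.norm_eq_abs, abs_of_nonneg (sub_nonneg.2 (expNeg_le_one _))]
    exact sub_le_sub_left (expNeg_antitone (hgf _)) 1
  rw [fredholmIntegrand, norm_mul, Finset.prod_mul_distrib]
  exact mul_le_mul hdet hprod (norm_nonneg _)
    (Finset.prod_nonneg fun i _ => hK.re_diag_nonneg _)

lemma norm_integral_fredholmIntegrand_le (hK : IsKernel K) {g f : E2 → ℝ≥0∞} (hgf : g ≤ f)
    (hint : Integrable fun x => (K x x).re * (1 - expNeg (f x))) (n : ℕ) :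
    ‖∫ x, fredholmIntegrand K g n x‖ ≤ (∫ x, (K x x).re * (1 - expNeg (f x))) ^ n := by
  calc ‖∫ x, fredholmIntegrand K g n x‖
      ≤ ∫ x : Fin n → E2, ∏ i, (K (x i) (x i)).re * (1 - expNeg (f (x i))) :=
        norm_integral_le_of_norm_le (Integrable.fintype_prod fun _ => hint)
          (ae_of_all _ (hK.norm_fredholmIntegrand_le hgf n))
    _ = (∫ x, (K x x).re * (1 - expNeg (f x))) ^ n := by
        have h := integral_fintype_prod_eq_pow (ι := Fin n) (μ := volume)
          fun x => (K x x).re * (1 - expNeg (f x))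
        rwa [Fintype.card_fin] at h

theorem tendsto_fredholmSeries_of_eventually_eq (hK : IsKernel K) {f : E2 → ℝ≥0∞}
    (hf : Measurable f)
    (hM : ∫⁻ x, ENNReal.ofReal ((K x x).re * (1 - expNeg (f x))) ≠ ∞)
    {g : ℕ → E2 → ℝ≥0∞} (hg : ∀ k, Measurable (g k)) (hgf : ∀ k, g k ≤ f)
    (hlim : ∀ x, ∀ᶠ k in atTop, g k x = f x) :
    Tendsto (fun k => fredholmSeries K (g k)) atTop (𝓝 (fredholmSeries K f)) := by
  set φ : E2 → ℝ := fun x => (K x x).re * (1 - expNeg (f x))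
  have hφ_nonneg : ∀ x, 0 ≤ φ x := fun x =>
    mul_nonneg (hK.re_diag_nonneg x) (sub_nonneg.2 (expNeg_le_one _))
  have hφ_meas : Measurable φ := by
    have hdiag : Continuous fun x : E2 => K x x :=
      hK.continuous.comp (f := fun x => (x, x)) (by fun_prop)
    exact (Complex.measurable_re.comp hdiag.measurable).mul
      (measurable_const.sub (measurable_expNeg.comp hf))
  have hφ_int : Integrable φ := by
    refine ⟨hφ_meas.aestronglyMeasurable, ?_⟩
    rw [hasFiniteIntegral_iff_ofReal (ae_of_all _ hφ_nonneg)]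
    exact lt_top_iff_ne_top.2 hM
  simp only [fredholmSeries_eq_tsum]
  refine tendsto_tsum_of_dominated_convergence (Real.summable_pow_div_factorial (∫ x, φ x))
    (fun n => ?_) (Eventually.of_forall fun k n => ?_)
  · refine (tendsto_integral_of_dominated_convergence _
      (fun k => (hK.measurable_fredholmIntegrand (hg k) n).aestronglyMeasurable)
      (Integrable.fintype_prod fun _ => hφ_int)
      (fun k => ae_of_all _ (hK.norm_fredholmIntegrand_le (hgf k) n))
      (ae_of_all _ fun x => ?_)).const_mul _
    refine tendsto_const_nhds.congr' ?_
    filter_upwards [eventually_all.2 fun i => hlim (x i)] with k hk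
    simp only [fredholmIntegrand, hk]
  · rw [norm_mul, norm_div, norm_pow, norm_neg, norm_one, one_pow, Complex.norm_natCast,
      one_div_mul_eq_div]
    gcongr
    exact hK.norm_integral_fredholmIntegrand_le (hgf k) hφ_int n

end IsKernel

/-- Continuity of the Fredholm series under truncation: if
`∫ K(x,x)(1−e^{−f(x)}) dx < ∞` and `f_k` is the restriction of `f` to the closed ball
`B(0,k)` (set to `0` outside), then `S(f_k) → S(f)` as `k → ∞`. -/
theorem stmt_13 (K : E2 → E2 → ℂ) (hK : IsKernel K)
    (f : E2 → ℝ≥0∞) (hf : Measurable f)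
    (hM : ∫⁻ x : E2, ENNReal.ofReal ((K x x).re * (1 - expNeg (f x))) ≠ ∞) :
    Tendsto
      (fun k : ℕ =>
        fredholmSeries K fun x => if ‖x‖ ≤ (k : ℝ) then f x else 0)
      atTop (nhds (fredholmSeries K f)) := by
  refine hK.tendsto_fredholmSeries_of_eventually_eq hf hM (fun k => ?_) (fun k x => ?_)
    fun x => ?_
  · exact Measurable.ite (measurableSet_le measurable_norm measurable_const) hf measurable_const
  · dsimp only
    split_ifs
    exacts [le_rfl, zero_le]
  · filter_upwards [eventually_ge_atTop ⌈‖x‖⌉₊] with k hk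
    exact if_pos ((Nat.le_ceil _).trans (mod_cast hk))
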